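/- The ℤ₅×ℤ₅ action generated by g₁ and g₂ on the Fermat quintic is fixed-point free: for all integers a, b not both divisible by 5, every nonzero z ∈ ℂ⁵ with z₀⁵+z₁⁵+z₂⁵+z₃⁵+z₄⁵ = 0, and every λ ∈ ℂ, one has g₁ᵃ(g₂ᵇ(z)) ≠ λ·z. -/

import Mathlib

/-!
Write `s = a • 1 ∈ ℤ/5`. In coordinates the eigenvector equation reads
`ω^{b(i-s)} z_{i-s} = λ z_i`. If `s = 0`, the map `g₂ᵇ` is diagonal with the distinct
eigenvalues `ω^{bi}`, so `z` has a single nonzero coordinate, which the Fermat equation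
forbids. If `s ≠ 0`, following the equation once around the `5`-cycle `i ↦ i - s` gives
`λ⁵ = 1`, because the exponents of `ω` picked up on the way add up to `5i - 15s ≡ 0`.
Taking fifth powers then gives `z_{i-s}⁵ = z_i⁵`; since `s` generates `ℤ/5`, all `z_i⁵` are
equal, and the Fermat equation forces them to vanish.
-/

/-- `ω = exp(2πi/5)`, a primitive fifth root of unity. -/
noncomputable def ω : ℂ := Complex.exp (2 * Real.pi * Complex.I / 5)

lemma ω_ne_zero : ω ≠ 0 := Complex.exp_ne_zero _

/-- `g₁(z₀,z₁,z₂,z₃,z₄) = (z₄,z₀,z₁,z₂,z₃)` as an invertible linear map of `ℂ⁵`. -/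
noncomputable def g1 : (Fin 5 → ℂ) ≃ₗ[ℂ] (Fin 5 → ℂ) where
  toFun z := fun i => z (i - 1)
  invFun z := fun i => z (i + 1)
  map_add' _ _ := rfl
  map_smul' _ _ := rfl
  left_inv z := by funext i; simp
  right_inv z := by funext i; simp

/-- `g₂(z₀,z₁,z₂,z₃,z₄) = (z₀, ω z₁, ω² z₂, ω³ z₃, ω⁴ z₄)` as an invertible linear map
of `ℂ⁵`. -/
noncomputable def g2 : (Fin 5 → ℂ) ≃ₗ[ℂ] (Fin 5 → ℂ) where
  toFun z := fun i => ω ^ (i : ℕ) * z i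
  invFun z := fun i => (ω ^ (i : ℕ))⁻¹ * z i
  map_add' a b := by funext i; simp [mul_add]
  map_smul' c a := by funext i; simp; ring
  left_inv z := by
    funext i
    exact inv_mul_cancel_left₀ (pow_ne_zero _ ω_ne_zero) _
  right_inv z := by
    funext i
    exact mul_inv_cancel_left₀ (pow_ne_zero _ ω_ne_zero) _

instance Nat.fact_prime_five : Fact (Nat.Prime 5) := ⟨Nat.prime_five⟩

theorem Function.Periodic.eq_of_zmultiples_eq_top {G α : Type*} [AddGroup G] {f : G → α}
    {c : G} (hf : Function.Periodic f c) (hc : AddSubgroup.zmultiples c = ⊤) (x y : G) :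
    f x = f y := by
  obtain ⟨n, hn⟩ := AddSubgroup.mem_zmultiples_iff.mp (hc ▸ AddSubgroup.mem_top (-x + y))
  rw [← add_neg_cancel_left x y, ← hn, hf.zsmul n]

theorem AddChar.map_sum_eq_prod {ι A M : Type*} [AddCommMonoid A] [CommMonoid M]
    (ψ : AddChar A M) (s : Finset ι) (f : ι → A) : ψ (∑ i ∈ s, f i) = ∏ i ∈ s, ψ (f i) := by
  classical
  induction s using Finset.induction_on with
  | empty => simp
  | insert i s hi ih => rw [Finset.sum_insert hi, Finset.prod_insert hi, map_add_eq_mul, ih]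

theorem prod_mul_apply_sub_nsmul_eq_pow_mul {G R : Type*} [AddGroup G] [CommMonoid R]
    {c z : G → R} {s : G} {μ : R} (h : ∀ i, c i * z (i - s) = μ * z i) (k : ℕ) (i : G) :
    (∏ m ∈ Finset.range k, c (i - m • s)) * z (i - k • s) = μ ^ k * z i := by
  induction k with
  | zero => simp
  | succ k ih =>
    rw [Finset.prod_range_succ, succ_nsmul', sub_add_eq_sub_sub_swap, mul_assoc, h,
      mul_left_comm, ih, pow_succ', mul_assoc]

theorem eq_of_diagonal_eigenvector {ι K : Type*} [MonoidWithZero K] [IsCancelMulZero K]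
    {d z : ι → K} {μ : K} (hd : Function.Injective d) (h : ∀ i, d i * z i = μ * z i) {i j : ι}
    (hi : z i ≠ 0) (hj : z j ≠ 0) : i = j :=
  hd (((mul_left_inj' hi).mp (h i)).trans ((mul_left_inj' hj).mp (h j)).symm)

theorem eq_zero_of_sum_eq_zero_of_const {ι M : Type*} [Fintype ι] [AddCommMonoid M]
    [IsAddTorsionFree M] {w : ι → M} (hsum : ∑ i, w i = 0) (hconst : ∀ i j, w i = w j) (j : ι) :
    w j = 0 := by
  rw [Finset.sum_congr rfl fun i _ => hconst i j, Finset.sum_const] at hsum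
  exact (nsmul_eq_zero_iff.mp hsum).resolve_right
    (Finset.card_ne_zero.mpr ⟨j, Finset.mem_univ j⟩)

namespace Fin

theorem five_nsmul (x : Fin 5) : 5 • x = 0 := by
  simpa using card_nsmul_eq_zero' (x := x)

theorem zsmul_eq_zero_iff_five_dvd (n : ℤ) {x : Fin 5} (hx : x ≠ 0) :
    n • x = 0 ↔ 5 ∣ n := by
  rw [← addOrderOf_dvd_iff_zsmul_eq_zero, addOrderOf_eq_prime (five_nsmul x) hx]
  norm_cast

theorem zsmul_injective {n : ℤ} (hn : ¬ 5 ∣ n) :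
    Function.Injective (n • · : Fin 5 → Fin 5) :=
  fun x y h => by
    by_contra hxy
    refine hn ((zsmul_eq_zero_iff_five_dvd n (sub_ne_zero.mpr hxy)).mp ?_)
    rw [zsmul_sub, sub_eq_zero]
    exact h

theorem sum_range_five_sub_nsmul (x s : Fin 5) :
    ∑ m ∈ Finset.range 5, (x - m • s - s) = 0 := by
  revert x s
  decide

end Fin

theorem isPrimitiveRoot_ω : IsPrimitiveRoot ω 5 := by
  simpa [ω] using Complex.isPrimitiveRoot_exp 5 (by norm_num)

noncomputable def ωChar : AddChar (Fin 5) ℂ :=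
  AddChar.zmodChar 5 isPrimitiveRoot_ω.pow_eq_one

theorem ωChar_injective : Function.Injective ωChar := fun x y h =>
  Fin.val_injective (isPrimitiveRoot_ω.pow_inj x.isLt y.isLt h)

theorem ωChar_pow_five (x : Fin 5) : ωChar x ^ 5 = 1 := by
  rw [← AddChar.map_nsmul_eq_pow, Fin.five_nsmul, AddChar.map_zero_eq_one]

theorem g1_zpow_apply (n : ℤ) (z : Fin 5 → ℂ) (i : Fin 5) :
    (g1 ^ n) z i = z (i - n • 1) := by
  induction n using Int.induction_on generalizing z with
  | zero => simp
  | succ k ih =>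
    rw [zpow_add_one, LinearEquiv.mul_apply, ih, add_zsmul, one_zsmul, ← sub_sub]
    rfl
  | pred k ih =>
    rw [zpow_sub_one, LinearEquiv.mul_apply, ih, sub_zsmul, one_zsmul, sub_add_eq_sub_sub,
      sub_neg_eq_add]
    rfl

theorem g2_zpow_apply (n : ℤ) (z : Fin 5 → ℂ) (i : Fin 5) :
    (g2 ^ n) z i = ωChar (n • i) * z i := by
  induction n using Int.induction_on generalizing z with
  | zero => simp
  | succ k ih =>
    rw [zpow_add_one, LinearEquiv.mul_apply, ih, add_zsmul, one_zsmul, AddChar.map_add_eq_mul,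
      mul_assoc]
    rfl
  | pred k ih =>
    rw [zpow_sub_one, LinearEquiv.mul_apply, ih, sub_zsmul, one_zsmul, AddChar.map_add_eq_mul,
      AddChar.map_neg_eq_inv, mul_assoc]
    rfl

theorem eq_zero_of_diagonal_of_sum_pow_five_eq_zero {b : ℤ} (hb : ¬ 5 ∣ b) {z : Fin 5 → ℂ}
    (hsum : ∑ i, z i ^ 5 = 0) {μ : ℂ} (h : ∀ i, ωChar (b • i) * z i = μ * z i) : z = 0 := by
  by_contra hz
  obtain ⟨j, hj⟩ := Function.ne_iff.mp hz
  have hsupp : ∀ i, i ≠ j → z i ^ 5 = 0 := fun i hij => by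
    by_contra hi
    exact hij (eq_of_diagonal_eigenvector (ωChar_injective.comp (Fin.zsmul_injective hb)) h
      (ne_zero_pow (by norm_num) hi) hj)
  rw [Finset.sum_eq_single j (fun i _ => hsupp i) (by simp)] at hsum
  exact hj (eq_zero_of_pow_eq_zero hsum)

theorem eq_zero_of_shift_of_sum_pow_five_eq_zero {s : Fin 5} (hs : s ≠ 0) (b : ℤ)
    {z : Fin 5 → ℂ} (hsum : ∑ i, z i ^ 5 = 0) {μ : ℂ}
    (h : ∀ i, ωChar (b • (i - s)) * z (i - s) = μ * z i) : z = 0 := by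
  by_contra hz
  obtain ⟨j, hj⟩ := Function.ne_iff.mp hz
  have hμ : μ ^ 5 = 1 := by
    have := prod_mul_apply_sub_nsmul_eq_pow_mul h 5 j
    rw [← AddChar.map_sum_eq_prod, ← Finset.smul_sum, Fin.sum_range_five_sub_nsmul, smul_zero,
      AddChar.map_zero_eq_one, one_mul, Fin.five_nsmul, sub_zero] at this
    exact (mul_eq_right₀ hj).mp this.symm
  have hper : Function.Periodic (fun i => z i ^ 5) (-s) := fun i => by
    have := congrArg (· ^ 5) (h i)
    simp only [mul_pow, ωChar_pow_five, hμ, one_mul] at this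
    rwa [← sub_eq_add_neg]
  have hconst := hper.eq_of_zmultiples_eq_top
    (zmultiples_eq_top_of_prime_card (Nat.card_fin 5) (neg_ne_zero.mpr hs))
  exact hj (eq_zero_of_pow_eq_zero (eq_zero_of_sum_eq_zero_of_const hsum hconst j))

/-- The `ℤ₅×ℤ₅` action generated by `g₁, g₂` is fixed-point free on the Fermat
quintic: if `a, b` are not both divisible by `5`, then `g₁ᵃ(g₂ᵇ(z))` is not a scalar
multiple of `z` for any nonzero `z` on the Fermat quintic. -/
theorem stmt_9 (a b : ℤ) (hab : ¬(5 ∣ a ∧ 5 ∣ b)) (z : Fin 5 → ℂ) (hz : z ≠ 0)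
    (hFermat : z 0 ^ 5 + z 1 ^ 5 + z 2 ^ 5 + z 3 ^ 5 + z 4 ^ 5 = 0) (lam : ℂ) :
    (g1 ^ a) ((g2 ^ b) z) ≠ lam • z := by
  intro h
  have hrel : ∀ i, ωChar (b • (i - a • 1)) * z (i - a • 1) = lam * z i := fun i => by
    simpa only [g1_zpow_apply, g2_zpow_apply, Pi.smul_apply, smul_eq_mul] using congrFun h i
  have hsum : ∑ i, z i ^ 5 = 0 := by rwa [Fin.sum_univ_five]
  by_cases ha : 5 ∣ a
  · simp only [(Fin.zsmul_eq_zero_iff_five_dvd a one_ne_zero).mpr ha, sub_zero] at hrel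
    exact hz (eq_zero_of_diagonal_of_sum_pow_five_eq_zero (fun hb => hab ⟨ha, hb⟩) hsum hrel)
  · exact hz (eq_zero_of_shift_of_sum_pow_five_eq_zero
      (mt (Fin.zsmul_eq_zero_iff_five_dvd a one_ne_zero).mp ha) b hsum hrel)
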